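/- arXiv:2009.14080 — 5 statements merged into one kernel-verified Lean document; each statement's English description precedes it below -/
import Mathlib

section
/- Let G be a finite group acting transitively on a finite set X with only one orbit, U a projective unitary representation of G on a finite-dimensional Hilbert space H, and suppose the restriction of U to the stability subgroup H_X of a base point is irreducible. Then any covariant POVM solution M (satisfying M_{gx} = U(g) M_x U(g)*) has M_x = k·1 for some k ≥ 0, the same for every x. -/
/-!
Covariance under the stabilizer of `x₀` makes `M x₀` commute with every `U h`, `h • x₀ = x₀`;
since this family is irreducible, Schur's lemma makes `M x₀` a scalar, which positivity forces
to be real and nonnegative. By transitivity every `M x` is a unitary conjugate of `M x₀`, and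
unitary conjugation fixes scalars.
-/

open ContinuousLinearMap

namespace Module.End

variable {K V : Type*} [Field K] [IsAlgClosed K] [AddCommGroup V] [Module K V]
  [FiniteDimensional K V]

theorem exists_eq_smul_one_of_forall_commute {ι : Type*} (A : ι → End K V)
    (hirr : ∀ W : Submodule K V, (∀ i, ∀ v ∈ W, A i v ∈ W) → W = ⊥ ∨ W = ⊤)
    (T : End K V) (hT : ∀ i, Commute (A i) T) : ∃ c : K, T = c • 1 := by
  rcases subsingleton_or_nontrivial V with _ | _
  · exact ⟨0, Subsingleton.elim _ _⟩
  obtain ⟨c, hc⟩ := exists_eigenvalue T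
  have hinv : ∀ i, ∀ v ∈ T.eigenspace c, A i v ∈ T.eigenspace c := fun i v hv => by
    rw [mem_eigenspace_iff] at hv ⊢
    rw [← mul_apply, ← (hT i).eq, mul_apply, hv, map_smul]
  have htop : T.eigenspace c = ⊤ := (hirr _ hinv).resolve_left hc
  exact ⟨c, LinearMap.ext fun v => mem_eigenspace_iff.mp (htop ▸ Submodule.mem_top)⟩

end Module.End

namespace ContinuousLinearMap

variable {𝕜 E : Type*} [RCLike 𝕜] [NormedAddCommGroup E] [InnerProductSpace 𝕜 E]

theorem IsPositive.exists_nonneg_of_smul_one {c : 𝕜} (hc : (c • 1 : E →L[𝕜] E).IsPositive) :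
    ∃ k : ℝ, 0 ≤ k ∧ (c • 1 : E →L[𝕜] E) = (k : 𝕜) • 1 := by
  rcases subsingleton_or_nontrivial E with _ | _
  · exact ⟨0, le_rfl, Subsingleton.elim _ _⟩
  have hc' : (c • 1 : E →ₗ[𝕜] E).IsPositive := by
    simpa [← isPositive_toLinearMap_iff] using hc
  obtain ⟨k, hk, rfl⟩ := RCLike.nonneg_iff_exists_ofReal.mp
    ((LinearMap.isPositive_one.isPositive_smul_iff one_ne_zero).mp hc')
  exact ⟨k, hk, rfl⟩

end ContinuousLinearMap

theorem covariant_povm_trivial_of_irreducible_stabilizer_general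
    {G X H : Type*} [Group G] [MulAction G X]
    [MulAction.IsPretransitive G X]
    [NormedAddCommGroup H] [InnerProductSpace ℂ H] [FiniteDimensional ℂ H]
    (x₀ : X)
    (U : G → (H →L[ℂ] H))
    (hUnit : ∀ g, adjoint (U g) ∘L U g = 1 ∧ U g ∘L adjoint (U g) = 1)
    (hirr : ∀ W : Submodule ℂ H,
      (∀ h : G, h • x₀ = x₀ → ∀ v ∈ W, U h v ∈ W) → W = ⊥ ∨ W = ⊤)
    (M : X → (H →L[ℂ] H))
    (hpos : ∀ x, (M x).IsPositive)
    (hcov : ∀ (g : G) (x : X), M (g • x) = U g ∘L M x ∘L adjoint (U g)) :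
    ∃ k : ℝ, 0 ≤ k ∧ ∀ x : X, M x = (k : ℂ) • (1 : H →L[ℂ] H) := by
  have hU (g : G) : U g ∈ unitary (H →L[ℂ] H) := Unitary.mem_iff.mpr (hUnit g)
  have hconj (g : G) (x : X) : M (g • x) = U g * M x * star (U g) := by
    rw [hcov, star_eq_adjoint, mul_assoc]; rfl
  have hstab (h : MulAction.stabilizer G x₀) : Commute (U h) (M x₀) := by
    rw [commute_unitary_iff_star_right_conjugate (hU h), ← hconj, h.2]
  obtain ⟨c, hc⟩ : ∃ c : ℂ, M x₀ = c • 1 := by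
    obtain ⟨c, hc⟩ := Module.End.exists_eq_smul_one_of_forall_commute
      (fun h : MulAction.stabilizer G x₀ => (U h : H →ₗ[ℂ] H))
      (fun W hW => hirr W fun h hh => hW ⟨h, hh⟩) (M x₀)
      (fun h => (hstab h).map toLinearMapRingHom)
    exact ⟨c, coe_injective (by simpa using hc)⟩
  obtain ⟨k, hk, hck⟩ := (hc ▸ hpos x₀).exists_nonneg_of_smul_one
  refine ⟨k, hk, fun x => ?_⟩
  obtain ⟨g, rfl⟩ := MulAction.exists_smul_eq G x₀ x
  rw [hconj, hc, hck]
  exact (commute_unitary_iff_star_right_conjugate (hU g)).mp ((Commute.one_right _).smul_right _)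

/-- If `G` acts transitively on `X`, `U` is a projective unitary
representation whose restriction to the stabilizer of a base point `x₀` is irreducible,
then any covariant POVM is trivial: `M x = k • 1` with `k ≥ 0` independent of `x`. -/
theorem covariant_povm_trivial_of_irreducible_stabilizer
    {G X H : Type*} [Group G] [Fintype G] [Fintype X] [MulAction G X]
    [MulAction.IsPretransitive G X]
    [NormedAddCommGroup H] [InnerProductSpace ℂ H] [FiniteDimensional ℂ H]
    (x₀ : X)
    (U : G → (H →L[ℂ] H)) (m : G → G → ℂ)
    (hUnit : ∀ g, adjoint (U g) ∘L U g = 1 ∧ U g ∘L adjoint (U g) = 1)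
    (hm : ∀ g h, ‖m g h‖ = 1)
    (hproj : ∀ g h, U (g * h) = m g h • (U g ∘L U h))
    (hirr : ∀ W : Submodule ℂ H,
      (∀ h : G, h • x₀ = x₀ → ∀ v ∈ W, U h v ∈ W) → W = ⊥ ∨ W = ⊤)
    (M : X → (H →L[ℂ] H))
    (hpos : ∀ x, (M x).IsPositive)
    (hnorm : ∑ x, M x = 1)
    (hcov : ∀ (g : G) (x : X), M (g • x) = U g ∘L M x ∘L adjoint (U g)) :
    ∃ k : ℝ, 0 ≤ k ∧ ∀ x : X, M x = (k : ℂ) • (1 : H →L[ℂ] H) :=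
  covariant_povm_trivial_of_irreducible_stabilizer_general x₀ U hUnit hirr M hpos hcov
end

section
/- Let G be a finite group acting on a finite set X, U a projective unitary representation of G on H, V a projective unitary representation of G on K, and M an (X,U)-covariant POVM. For each orbit O fix a state σ'_O on K and define the H_O-invariant state σ_O := (#H_O)^{-1} ∑_{h∈H_O} V(h) σ'_O V(h)*. Then the family I^{nuc}_x(ρ) := tr[ρ M_x] · V(g_x) σ_O V(g_x)* (for x ∈ O, x = g_x·x_O) is a well-defined (X,U,V)-covariant instrument measuring M, i.e. tr[I^{nuc}_x(ρ)] = tr[ρ M_x] for all states ρ and I^{nuc}_{gx}(U(g)ρU(g)*) = V(g) I^{nuc}_x(ρ) V(g)* for all g. -/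
/-!
Both defining properties are inherited from the POVM: the trace of `I x ρ` is `tr[ρ M x]`
times the trace of a unitary conjugate of the state `σ`, and covariance of `M` together with
cyclicity of the trace moves `U g` out of the probability. For the output state, the
multiplier of a projective representation has modulus one, so it cancels in every
conjugation `T ↦ V g T V(g)*`; hence these conjugations compose along the group law. The
stabilizer average `σ` is then fixed by conjugation with the stabilizer, which is exactly
what makes `V(gₓ) σ V(gₓ)*` independent of the choice of `gₓ`, and covariance follows
from `g gₓ` being an admissible choice for `g • x`.
-/

open ContinuousLinearMap

noncomputable section

theorem trace_comp_comp_of_comp_eq_one {R E : Type*} [CommRing R] [AddCommGroup E] [Module R E]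
    [TopologicalSpace E] {u v : E →L[R] E} (h : v ∘L u = 1) (A : E →L[R] E) :
    LinearMap.trace R E ((u ∘L A ∘L v : E →L[R] E) : E →ₗ[R] E)
      = LinearMap.trace R E (A : E →ₗ[R] E) := by
  have h' : (v : E →ₗ[R] E) * u = 1 := congrArg ContinuousLinearMap.toLinearMap h
  calc LinearMap.trace R E ((u ∘L A ∘L v : E →L[R] E) : E →ₗ[R] E)
      = LinearMap.trace R E ((u : E →ₗ[R] E) * ((A : E →ₗ[R] E) * v)) := rfl
    _ = LinearMap.trace R E ((A : E →ₗ[R] E) * v * u) := LinearMap.trace_mul_comm _ _ _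
    _ = LinearMap.trace R E (A : E →ₗ[R] E) := by rw [mul_assoc, h', mul_one]

theorem comp_comp_comp_of_comp_eq_one {R E : Type*} [Semiring R] [AddCommMonoid E] [Module R E]
    [TopologicalSpace E] {u v : E →L[R] E} (h : v ∘L u = 1) (A B : E →L[R] E) :
    (u ∘L A ∘L v) ∘L (u ∘L B ∘L v) = u ∘L (A ∘L B) ∘L v := by
  simp only [comp_assoc]
  rw [← comp_assoc v u, h, one_def, id_comp]

theorem sum_stabilizer_mul_left {G X M : Type*} [Group G] [Fintype G] [MulAction G X]
    [DecidableEq X] [AddCommMonoid M] {a : X} {h : G} (hh : h • a = a) (f : G → M) :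
    ∑ k ∈ Finset.univ.filter (fun k : G => k • a = a), f (h * k)
      = ∑ k ∈ Finset.univ.filter (fun k : G => k • a = a), f k := by
  refine Finset.sum_equiv (Equiv.mulLeft h) (fun k => ?_) (fun _ _ => rfl)
  simpa using (Subgroup.mul_mem_cancel_left (MulAction.stabilizer G a) hh).symm

section Conjugation

variable {𝕜 E : Type*} [RCLike 𝕜] [NormedAddCommGroup E] [InnerProductSpace 𝕜 E]
  [CompleteSpace E]

theorem smul_comp_comp_adjoint_smul {c : 𝕜} (hc : ‖c‖ = 1) (u T : E →L[𝕜] E) :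
    (c • u) ∘L T ∘L adjoint (c • u) = u ∘L T ∘L adjoint u := by
  have hcc : (starRingEnd 𝕜) c * c = 1 := by rw [RCLike.conj_mul, hc]; norm_num
  simp only [map_smulₛₗ, smul_comp, comp_smul, smul_smul, hcc, one_smul]

variable {G : Type*} [Group G] {V : G → (E →L[𝕜] E)} {m : G → G → 𝕜}

theorem comp_comp_adjoint_mul_of_projective (hm : ∀ g h, ‖m g h‖ = 1)
    (hV : ∀ g h, V (g * h) = m g h • (V g ∘L V h)) (g h : G) (T : E →L[𝕜] E) :
    V (g * h) ∘L T ∘L adjoint (V (g * h))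
      = V g ∘L (V h ∘L T ∘L adjoint (V h)) ∘L adjoint (V g) := by
  rw [hV, smul_comp_comp_adjoint_smul (hm g h), adjoint_comp]
  rfl

variable {X : Type*} [Fintype G] [MulAction G X] [DecidableEq X]

/-- The state `σ_O` of the paper, for the orbit with base point `a`. -/
def stabilizerAverage (V : G → (E →L[𝕜] E)) (a : X) (T : E →L[𝕜] E) : E →L[𝕜] E :=
  (((Finset.univ.filter fun h : G => h • a = a).card : 𝕜))⁻¹ •
    ∑ h ∈ Finset.univ.filter (fun h : G => h • a = a), V h ∘L T ∘L adjoint (V h)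

theorem trace_stabilizerAverage (hV : ∀ g, adjoint (V g) ∘L V g = 1)
    (a : X) (T : E →L[𝕜] E) :
    LinearMap.trace 𝕜 E (stabilizerAverage V a T : E →ₗ[𝕜] E)
      = LinearMap.trace 𝕜 E (T : E →ₗ[𝕜] E) := by
  have hcard : ((Finset.univ.filter fun h : G => h • a = a).card : 𝕜) ≠ 0 :=
    Nat.cast_ne_zero.mpr (Finset.card_ne_zero_of_mem (by simp : (1 : G) ∈ _))
  simp only [stabilizerAverage, toLinearMap_smul, map_smul, toLinearMap_sum, map_sum,
    trace_comp_comp_of_comp_eq_one (hV _), Finset.sum_const, nsmul_eq_mul, smul_eq_mul,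
    ← mul_assoc, inv_mul_cancel₀ hcard, one_mul]

theorem comp_stabilizerAverage_comp_adjoint (hm : ∀ g h, ‖m g h‖ = 1)
    (hV : ∀ g h, V (g * h) = m g h • (V g ∘L V h)) {a : X} {h : G} (hh : h • a = a)
    (T : E →L[𝕜] E) :
    V h ∘L stabilizerAverage V a T ∘L adjoint (V h) = stabilizerAverage V a T := by
  simp only [stabilizerAverage, comp_smul, smul_comp, comp_finsetSum, finsetSum_comp,
    ← comp_comp_adjoint_mul_of_projective hm hV h]
  rw [sum_stabilizer_mul_left hh (fun k => V k ∘L T ∘L adjoint (V k))]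

theorem comp_stabilizerAverage_comp_adjoint_eq_of_smul_eq (hm : ∀ g h, ‖m g h‖ = 1)
    (hV : ∀ g h, V (g * h) = m g h • (V g ∘L V h)) {a x : X} {g g' : G} (hg : g • a = x)
    (hg' : g' • a = x) (T : E →L[𝕜] E) :
    V g' ∘L stabilizerAverage V a T ∘L adjoint (V g')
      = V g ∘L stabilizerAverage V a T ∘L adjoint (V g) := by
  have hstab : (g'⁻¹ * g) • a = a := by rw [mul_smul, hg, ← hg', inv_smul_smul]
  rw [show g = g' * (g'⁻¹ * g) by group, comp_comp_adjoint_mul_of_projective hm hV,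
    comp_stabilizerAverage_comp_adjoint hm hV hstab]

end Conjugation

theorem nuclear_covariant_instrument_general
    {G X H K : Type*} [Group G] [Fintype G] [DecidableEq X] [MulAction G X]
    [NormedAddCommGroup H] [InnerProductSpace ℂ H] [FiniteDimensional ℂ H]
    [NormedAddCommGroup K] [InnerProductSpace ℂ K] [FiniteDimensional ℂ K]
    (U : G → (H →L[ℂ] H)) (V : G → (K →L[ℂ] K)) (m : G → G → ℂ)
    (hUu : ∀ g, adjoint (U g) ∘L U g = 1 ∧ U g ∘L adjoint (U g) = 1)
    (hVu : ∀ g, adjoint (V g) ∘L V g = 1 ∧ V g ∘L adjoint (V g) = 1)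
    (hm : ∀ g h, ‖m g h‖ = 1)
    (hVproj : ∀ g h, V (g * h) = m g h • (V g ∘L V h))
    (M : X → (H →L[ℂ] H))
    (hMcov : ∀ (g : G) (x : X), M (g • x) = U g ∘L M x ∘L adjoint (U g))
    -- orbit data: `b x` is the base point of the orbit of `x`, `gx x • b x = x`
    (b : X → X) (gx : X → G)
    (hb : ∀ (g : G) (x : X), b (g • x) = b x) (hgx : ∀ x, gx x • b x = x)
    -- a state `σ'` on `K` for each orbit
    (σ' : X → (K →L[ℂ] K)) (hσ'orb : ∀ (g : G) (x : X), σ' (g • x) = σ' x)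
    (hσ'tr : ∀ x, LinearMap.trace ℂ K (σ' x : K →ₗ[ℂ] K) = 1)
    -- the stabilizer-averaged state `σ`
    (σ : X → (K →L[ℂ] K))
    (hσ : ∀ x, σ x =
      (((Finset.univ.filter fun h : G => h • b x = b x).card : ℂ))⁻¹ •
        ∑ h ∈ Finset.univ.filter (fun h : G => h • b x = b x),
          V h ∘L σ' x ∘L adjoint (V h))
    -- the nuclear instrument
    (I : X → (H →L[ℂ] H) → (K →L[ℂ] K))
    (hI : ∀ x ρ, I x ρ =
      (LinearMap.trace ℂ H ((ρ ∘L M x : H →L[ℂ] H) : H →ₗ[ℂ] H)) •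
        (V (gx x) ∘L σ x ∘L adjoint (V (gx x)))) :
    -- `I` measures `M`
    (∀ (x : X) (ρ : H →L[ℂ] H), ρ.IsPositive →
        LinearMap.trace ℂ H (ρ : H →ₗ[ℂ] H) = 1 →
        LinearMap.trace ℂ K ((I x ρ : K →L[ℂ] K) : K →ₗ[ℂ] K)
          = LinearMap.trace ℂ H ((ρ ∘L M x : H →L[ℂ] H) : H →ₗ[ℂ] H)) ∧
    -- well-definedness: independence of the choice of `gₓ`
    (∀ (g' : G) (x : X), g' • b x = x →
        V g' ∘L σ x ∘L adjoint (V g') = V (gx x) ∘L σ x ∘L adjoint (V (gx x))) ∧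
    -- `(X,U,V)`-covariance
    (∀ (g : G) (x : X) (ρ : H →L[ℂ] H),
        I (g • x) (U g ∘L ρ ∘L adjoint (U g)) = V g ∘L I x ρ ∘L adjoint (V g)) := by
  have hσavg : ∀ x, σ x = stabilizerAverage V (b x) (σ' x) := hσ
  have hwd : ∀ (g' : G) (x : X), g' • b x = x →
      V g' ∘L σ x ∘L adjoint (V g') = V (gx x) ∘L σ x ∘L adjoint (V (gx x)) := fun g' x hg' => by
    rw [hσavg]
    exact comp_stabilizerAverage_comp_adjoint_eq_of_smul_eq hm hVproj (hgx x) hg' _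
  refine ⟨fun x ρ _ _ => ?_, hwd, fun g x ρ => ?_⟩
  · rw [hI, toLinearMap_smul, map_smul, trace_comp_comp_of_comp_eq_one (hVu _).1, hσavg,
      trace_stabilizerAverage (fun g => (hVu g).1), hσ'tr, smul_eq_mul, mul_one]
  · have hσorb : σ (g • x) = σ x := by rw [hσavg, hσavg, hb, hσ'orb]
    have hprob : LinearMap.trace ℂ H
        (((U g ∘L ρ ∘L adjoint (U g)) ∘L M (g • x) : H →L[ℂ] H) : H →ₗ[ℂ] H)
          = LinearMap.trace ℂ H ((ρ ∘L M x : H →L[ℂ] H) : H →ₗ[ℂ] H) := by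
      rw [hMcov, comp_comp_comp_of_comp_eq_one (hUu g).1,
        trace_comp_comp_of_comp_eq_one (hUu g).1]
    have hstate : V (gx (g • x)) ∘L σ (g • x) ∘L adjoint (V (gx (g • x)))
        = V g ∘L (V (gx x) ∘L σ x ∘L adjoint (V (gx x))) ∘L adjoint (V g) := by
      rw [← hwd (g * gx x) (g • x) (by rw [hb, mul_smul, hgx]), hσorb,
        comp_comp_adjoint_mul_of_projective hm hVproj]
    rw [hI, hI, hprob, hstate, smul_comp, comp_smul]

/-- Given an `(X,U)`-covariant POVM `M` and, for each orbit, a state `σ'`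
averaged over the stabilizer into `σ`, the family
`I x ρ := tr[ρ M x] • V(gₓ) σ V(gₓ)*` is a well-defined `(X,U,V)`-covariant
(nuclear) instrument measuring `M`. -/
theorem nuclear_covariant_instrument
    {G X H K : Type*} [Group G] [Fintype G] [Fintype X] [DecidableEq X] [MulAction G X]
    [NormedAddCommGroup H] [InnerProductSpace ℂ H] [FiniteDimensional ℂ H]
    [NormedAddCommGroup K] [InnerProductSpace ℂ K] [FiniteDimensional ℂ K]
    (U : G → (H →L[ℂ] H)) (V : G → (K →L[ℂ] K)) (m : G → G → ℂ)
    (hUu : ∀ g, adjoint (U g) ∘L U g = 1 ∧ U g ∘L adjoint (U g) = 1)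
    (hVu : ∀ g, adjoint (V g) ∘L V g = 1 ∧ V g ∘L adjoint (V g) = 1)
    (hm : ∀ g h, ‖m g h‖ = 1)
    (hUproj : ∀ g h, U (g * h) = m g h • (U g ∘L U h))
    (hVproj : ∀ g h, V (g * h) = m g h • (V g ∘L V h))
    (M : X → (H →L[ℂ] H))
    (hMpos : ∀ x, (M x).IsPositive) (hMnorm : ∑ x, M x = 1)
    (hMcov : ∀ (g : G) (x : X), M (g • x) = U g ∘L M x ∘L adjoint (U g))
    -- orbit data: `b x` is the base point of the orbit of `x`, `gx x • b x = x`
    (b : X → X) (gx : X → G)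
    (hb : ∀ (g : G) (x : X), b (g • x) = b x) (hgx : ∀ x, gx x • b x = x)
    -- a state `σ'` on `K` for each orbit
    (σ' : X → (K →L[ℂ] K)) (hσ'orb : ∀ (g : G) (x : X), σ' (g • x) = σ' x)
    (hσ'pos : ∀ x, (σ' x).IsPositive)
    (hσ'tr : ∀ x, LinearMap.trace ℂ K (σ' x : K →ₗ[ℂ] K) = 1)
    -- the stabilizer-averaged state `σ`
    (σ : X → (K →L[ℂ] K))
    (hσ : ∀ x, σ x =
      (((Finset.univ.filter fun h : G => h • b x = b x).card : ℂ))⁻¹ •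
        ∑ h ∈ Finset.univ.filter (fun h : G => h • b x = b x),
          V h ∘L σ' x ∘L adjoint (V h))
    -- the nuclear instrument
    (I : X → (H →L[ℂ] H) → (K →L[ℂ] K))
    (hI : ∀ x ρ, I x ρ =
      (LinearMap.trace ℂ H ((ρ ∘L M x : H →L[ℂ] H) : H →ₗ[ℂ] H)) •
        (V (gx x) ∘L σ x ∘L adjoint (V (gx x)))) :
    -- `I` measures `M`
    (∀ (x : X) (ρ : H →L[ℂ] H), ρ.IsPositive →
        LinearMap.trace ℂ H (ρ : H →ₗ[ℂ] H) = 1 →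
        LinearMap.trace ℂ K ((I x ρ : K →L[ℂ] K) : K →ₗ[ℂ] K)
          = LinearMap.trace ℂ H ((ρ ∘L M x : H →L[ℂ] H) : H →ₗ[ℂ] H)) ∧
    -- well-definedness: independence of the choice of `gₓ`
    (∀ (g' : G) (x : X), g' • b x = x →
        V g' ∘L σ x ∘L adjoint (V g') = V (gx x) ∘L σ x ∘L adjoint (V (gx x))) ∧
    -- `(X,U,V)`-covariance
    (∀ (g : G) (x : X) (ρ : H →L[ℂ] H),
        I (g • x) (U g ∘L ρ ∘L adjoint (U g)) = V g ∘L I x ρ ∘L adjoint (V g)) :=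
  nuclear_covariant_instrument_general U V m hUu hVu hm hVproj M hMcov b gx hb hgx σ' hσ'orb hσ'tr σ
    hσ I hI
end
end

section
/- An instrument (I_x)_{x∈X} on finite X is (X,U,V)-covariant if and only if I_x(ρ) = V(g_x) Λ_O(U(g_x)* ρ U(g_x)) V(g_x)* for all x ∈ O and all orbits O, where Λ_O := I_{x_O} is a completely positive map satisfying Λ_O(U(h)ρU(h)*) = V(h)Λ_O(ρ)V(h)* for all h in the stabilizer H_O of x_O. -/
open ContinuousLinearMap
noncomputable section

set_option maxHeartbeats 1000000 in
/-- An instrument `(I x)` is `(X,U,V)`-covariant if and only if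
`I x ρ = V(gₓ) Λ_O (U(gₓ)* ρ U(gₓ)) V(gₓ)*` for all `x` in each orbit `O`, where
`Λ_O := I (x_O)` satisfies the stabilizer covariance
`Λ_O (U h ρ U h*) = V h Λ_O(ρ) V h*` for `h` in the stabilizer of the base point. -/
theorem covariant_instrument_iff_orbit_form
    {G X H K : Type*} [Group G] [Fintype G] [Fintype X] [MulAction G X]
    [NormedAddCommGroup H] [InnerProductSpace ℂ H] [FiniteDimensional ℂ H]
    [NormedAddCommGroup K] [InnerProductSpace ℂ K] [FiniteDimensional ℂ K]
    (U : G → (H →L[ℂ] H)) (V : G → (K →L[ℂ] K))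
    (hUhom : ∀ g g', U (g * g') = U g ∘L U g') (hU1 : U 1 = 1)
    (hVhom : ∀ g g', V (g * g') = V g ∘L V g') (hV1 : V 1 = 1)
    (hUu : ∀ g, adjoint (U g) ∘L U g = 1 ∧ U g ∘L adjoint (U g) = 1)
    (hVu : ∀ g, adjoint (V g) ∘L V g = 1 ∧ V g ∘L adjoint (V g) = 1)
    -- orbit data: `b x` the base point of the orbit of `x`, `gx x • b x = x`
    (b : X → X) (gx : X → G)
    (hb : ∀ (g : G) (x : X), b (g • x) = b x)
    (hbb : ∀ x, b (b x) = b x)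
    (hgx : ∀ x, gx x • b x = x)
    (I : X → (H →L[ℂ] H) → (K →L[ℂ] K)) :
    (∀ (g : G) (x : X) (ρ : H →L[ℂ] H),
        I (g • x) (U g ∘L ρ ∘L adjoint (U g)) = V g ∘L I x ρ ∘L adjoint (V g))
    ↔ ((∀ (x : X) (ρ : H →L[ℂ] H),
          I x ρ = V (gx x) ∘L
            I (b x) (adjoint (U (gx x)) ∘L ρ ∘L U (gx x)) ∘L adjoint (V (gx x))) ∧
       (∀ (x : X) (h : G) (ρ : H →L[ℂ] H), h • b x = b x →
          I (b x) (U h ∘L ρ ∘L adjoint (U h)) = V h ∘L I (b x) ρ ∘L adjoint (V h))) := by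
  -- unitarity: adjoint = inverse
  have hUmul : ∀ g g' : G, U g ∘L U g' = U (g * g') := fun g g' => (hUhom g g').symm
  have hVmul : ∀ g g' : G, V g ∘L V g' = V (g * g') := fun g g' => (hVhom g g').symm
  have hUinv : ∀ g : G, U g ∘L U g⁻¹ = 1 := by
    intro g; rw [hUmul, mul_inv_cancel, hU1]
  have hUinv' : ∀ g : G, U g⁻¹ ∘L U g = 1 := by
    intro g; rw [hUmul, inv_mul_cancel, hU1]
  have hVinv : ∀ g : G, V g ∘L V g⁻¹ = 1 := by
    intro g; rw [hVmul, mul_inv_cancel, hV1]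
  have hUadj : ∀ g : G, adjoint (U g) = U g⁻¹ := by
    intro g
    calc adjoint (U g) = (U g⁻¹ ∘L U g) ∘L adjoint (U g) := by rw [hUinv' g, one_def, id_comp]
    _ = U g⁻¹ ∘L (U g ∘L adjoint (U g)) := by rw [comp_assoc]
    _ = U g⁻¹ := by rw [(hUu g).2]; rfl
  have hVadj : ∀ g : G, adjoint (V g) = V g⁻¹ := by
    intro g
    have h1 : V g⁻¹ ∘L V g = 1 := by rw [hVmul, inv_mul_cancel, hV1]
    calc adjoint (V g) = (V g⁻¹ ∘L V g) ∘L adjoint (V g) := by rw [h1, one_def, id_comp]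
    _ = V g⁻¹ ∘L (V g ∘L adjoint (V g)) := by rw [comp_assoc]
    _ = V g⁻¹ := by rw [(hVu g).2]; rfl
  -- conjugation collapsing lemmas
  have keyU : ∀ (g1 g2 : G) (ρ : H →L[ℂ] H),
      U g1 ∘L (U g2 ∘L ρ ∘L U g2⁻¹) ∘L U g1⁻¹ = U (g1 * g2) ∘L ρ ∘L U (g1 * g2)⁻¹ := by
    intro g1 g2 ρ
    rw [mul_inv_rev, ← hUmul g1 g2, ← hUmul g2⁻¹ g1⁻¹]
    simp only [comp_assoc]
  have keyV : ∀ (g1 g2 : G) (T : K →L[ℂ] K),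
      V g1 ∘L (V g2 ∘L T ∘L V g2⁻¹) ∘L V g1⁻¹ = V (g1 * g2) ∘L T ∘L V (g1 * g2)⁻¹ := by
    intro g1 g2 T
    rw [mul_inv_rev, ← hVmul g1 g2, ← hVmul g2⁻¹ g1⁻¹]
    simp only [comp_assoc]
  constructor
  · intro hcov
    constructor
    · intro x ρ
      have h := hcov (gx x) (b x) (adjoint (U (gx x)) ∘L ρ ∘L U (gx x))
      rw [hgx x] at h
      rw [← h]
      congr 1
      rw [hUadj]
      symm
      calc U (gx x) ∘L (U (gx x)⁻¹ ∘L ρ ∘L U (gx x)) ∘L U (gx x)⁻¹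
          = ((U (gx x) ∘L U (gx x)⁻¹) ∘L ρ) ∘L (U (gx x) ∘L U (gx x)⁻¹) := by
            simp only [comp_assoc]
        _ = ρ := by rw [hUinv (gx x)]; simp [one_def]
    · intro x h ρ hst
      have := hcov h (b x) ρ
      rwa [hst] at this
  · rintro ⟨h1, h2⟩ g x ρ
    simp only [hUadj, hVadj] at h1 h2 ⊢
    have hbgx : b (g • x) = b x := hb g x
    obtain ⟨a, ha⟩ : ∃ a, gx (g • x) = a := ⟨_, rfl⟩
    obtain ⟨c, hc⟩ : ∃ c, gx x = c := ⟨_, rfl⟩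
    have habx : a • b x = g • x := by rw [← ha, ← hbgx]; exact hgx (g • x)
    have hcx : c • b x = x := by rw [← hc]; exact hgx x
    have hstab : (a⁻¹ * g * c) • b x = b x := by
      rw [mul_smul, mul_smul, hcx, ← habx, inv_smul_smul]
    have e1 := h1 (g • x) (U g ∘L ρ ∘L U g⁻¹)
    rw [hbgx, ha] at e1
    have harg : U a⁻¹ ∘L (U g ∘L ρ ∘L U g⁻¹) ∘L U a =
        U (a⁻¹ * g * c) ∘L (U c⁻¹ ∘L ρ ∘L U c) ∘L U (a⁻¹ * g * c)⁻¹ := by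
      rw [show U a = U a⁻¹⁻¹ from by rw [inv_inv],
        show U c = U c⁻¹⁻¹ from by rw [inv_inv]]
      rw [keyU a⁻¹ g ρ, keyU (a⁻¹ * g * c) c⁻¹ ρ]
      rw [show a⁻¹ * g * c * c⁻¹ = a⁻¹ * g from by group]
    rw [harg, h2 x (a⁻¹ * g * c) (U c⁻¹ ∘L ρ ∘L U c) hstab] at e1
    have e2 := h1 x ρ
    rw [hc] at e2
    rw [e1, e2, keyV a (a⁻¹ * g * c), show a * (a⁻¹ * g * c) = g * c from by group,
      keyV g c]
end
end

section
/- Let M be an (X,U)-covariant rank-1 POVM for a finite group G acting on finite X, with seed operators K_O = |d_O⟩⟨d_O| on each orbit O (d_O a common eigenvector of U(h), h ∈ H_O, or zero). Define the enlarged value space X' := (set of orbits) × G with G-action g·(O,g') := (O,gg'), and M'_{O,g} := (#H_O)^{-1} U(g)|d_O⟩⟨d_O|U(g)*. Then M' is a covariant POVM on X' (M'_{g(O,g')} = U(g)M'_{O,g'}U(g)*), M' is normalized whenever M is, and M is a post-processing of M': M_x = ∑_{h∈H_O} M'_{O,g_x h} for x ∈ O. -/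
/-!
Because the multiplier `m` and the eigenvalues of `d_O` under the stabilizer `H_O` are unimodular,
the phases cancel in `U(g)|d_O⟩⟨d_O|U(g)*`, which therefore depends only on the coset `g H_O`,
i.e. on the point `g x_O`: it equals `M_{g x_O}`. So `M'_{O,g} = (#H_O)⁻¹ M_{g x_O}`, and both the
normalization of `M'` and the post-processing formula follow from the fact that `g ↦ g x_O`
hits every point of the orbit `O` exactly `#H_O` times.
-/

open ContinuousLinearMap
noncomputable section

/-- The rank-one projection-like operator `|v⟩⟨v|`. -/
def projOp {H : Type*} [NormedAddCommGroup H] [InnerProductSpace ℂ H] (v : H) :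
    H →L[ℂ] H :=
  (innerSL ℂ v).smulRight v

open Finset InnerProductSpace
open scoped ComplexOrder

lemma natCast_inv_smul_nsmul {K E : Type*} [DivisionSemiring K] [CharZero K] [AddCommMonoid E]
    [Module K E] {n : ℕ} (hn : n ≠ 0) (T : E) : (n : K)⁻¹ • n • T = T := by
  rw [← Nat.cast_smul_eq_nsmul K, smul_smul, inv_mul_cancel₀ (Nat.cast_ne_zero.mpr hn),
    one_smul]

section Orbits

variable {G α : Type*} [Group G] [Fintype G] [MulAction G α] [DecidableEq α]

lemma card_filter_smul_eq_smul (a : α) (k : G) :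
    #{g : G | g • a = k • a} = #{h : G | h • a = a} :=
  card_nbij' (k⁻¹ * ·) (k * ·) (fun g hg => by simp_all [mul_smul])
    (fun h hh => by simp_all [mul_smul]) (fun g _ => by simp) (fun h _ => by simp)

lemma sum_smul_eq_card_stabilizer_nsmul {M : Type*} [AddCommMonoid M] (a : α) (s : Finset α)
    (hs : ∀ y ∈ s, ∃ k : G, k • a = y) (hmaps : ∀ g : G, g • a ∈ s) (f : α → M) :
    ∑ g : G, f (g • a) = #{h : G | h • a = a} • ∑ y ∈ s, f y := by
  rw [← sum_fiberwise_of_maps_to (fun g _ => hmaps g), smul_sum]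
  refine sum_congr rfl fun y hy => ?_
  obtain ⟨k, rfl⟩ := hs y hy
  calc ∑ g ∈ {g : G | g • a = k • a}, f (g • a)
      = ∑ _g ∈ {g : G | g • a = k • a}, f (k • a) :=
        sum_congr rfl fun g hg => by rw [(mem_filter.mp hg).2]
    _ = #{h : G | h • a = a} • f (k • a) := by
        rw [sum_const, card_filter_smul_eq_smul]

lemma card_filter_smul_self_ne_zero (a : α) : #{h : G | h • a = a} ≠ 0 :=
  (card_pos.mpr ⟨1, by simp⟩).ne'

end Orbits

section Operators

variable {H : Type*} [NormedAddCommGroup H] [InnerProductSpace ℂ H]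

lemma projOp_eq_rankOne (v : H) : projOp v = rankOne ℂ v v := rfl

lemma conj_smul_of_norm_eq_one [CompleteSpace H] {c : ℂ} (hc : ‖c‖ = 1) (A B : H →L[ℂ] H) :
    (c • A) ∘L B ∘L adjoint (c • A) = A ∘L B ∘L adjoint A := by
  have hcc : c * (starRingEnd ℂ) c = 1 := by rw [Complex.mul_conj', hc]; norm_num
  rw [← star_eq_adjoint, star_smul, star_eq_adjoint, smul_comp, comp_smul, comp_smul,
    smul_smul, Complex.star_def, hcc, one_smul]

lemma conj_projOp [CompleteSpace H] (A : H →L[ℂ] H) (v : H) :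
    A ∘L projOp v ∘L adjoint A = projOp (A v) := by
  rw [projOp_eq_rankOne, rankOne_comp, comp_rankOne, adjoint_adjoint, projOp_eq_rankOne]

lemma projOp_smul_of_norm_eq_one {c : ℂ} (hc : ‖c‖ = 1) (v : H) :
    projOp (c • v) = projOp v := by
  have hcc : c * (starRingEnd ℂ) c = 1 := by rw [Complex.mul_conj', hc]; norm_num
  ext w
  simp only [projOp_eq_rankOne, rankOne_apply, inner_smul_left, smul_smul, mul_comm _ c,
    ← mul_assoc, hcc, one_mul]

lemma isPositive_conj_projOp [CompleteSpace H] (A : H →L[ℂ] H) (v : H) :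
    (A ∘L projOp v ∘L adjoint A).IsPositive :=
  (isPositive_rankOne_self v).conj_adjoint A

end Operators

section ProjectiveRepresentation

variable {G H : Type*} [Group G] [NormedAddCommGroup H] [InnerProductSpace ℂ H] [CompleteSpace H]
  {U : G → (H →L[ℂ] H)} {m : G → G → ℂ}

lemma conj_mul_of_projective (hm : ∀ g h, ‖m g h‖ = 1)
    (hproj : ∀ g h, U (g * h) = m g h • (U g ∘L U h)) (g g' : G) (T : H →L[ℂ] H) :
    U (g * g') ∘L T ∘L adjoint (U (g * g')) =
      U g ∘L (U g' ∘L T ∘L adjoint (U g')) ∘L adjoint (U g) := by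
  rw [hproj, conj_smul_of_norm_eq_one (hm g g'), adjoint_comp]
  rfl

lemma conj_projOp_eq_of_eigenvector (hm : ∀ g h, ‖m g h‖ = 1)
    (hproj : ∀ g h, U (g * h) = m g h • (U g ∘L U h)) {g k : G} {v : H} {c : ℂ}
    (hc : ‖c‖ = 1) (hv : U (k⁻¹ * g) v = c • v) :
    U g ∘L projOp v ∘L adjoint (U g) = U k ∘L projOp v ∘L adjoint (U k) := by
  conv_lhs => rw [← mul_inv_cancel_left k g, conj_mul_of_projective hm hproj,
    conj_projOp, hv, projOp_smul_of_norm_eq_one hc]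

end ProjectiveRepresentation

theorem rank_one_covariant_povm_refinement_general
    {G X H : Type*} [Group G] [Fintype G] [Fintype X] [DecidableEq X] [MulAction G X]
    [NormedAddCommGroup H] [InnerProductSpace ℂ H] [FiniteDimensional ℂ H]
    (U : G → (H →L[ℂ] H)) (m : G → G → ℂ)
    (hm : ∀ g h, ‖m g h‖ = 1)
    (hproj : ∀ g h, U (g * h) = m g h • (U g ∘L U h))
    -- orbit data
    (b : X → X) (gx : X → G)
    (hb : ∀ (g : G) (x : X), b (g • x) = b x)
    (hbb : ∀ x, b (b x) = b x)
    (hgx : ∀ x, gx x • b x = x)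
    -- the seed vectors, constant on orbits, common eigenvectors of the stabilizer
    (d : X → H) (hd : ∀ (g : G) (x : X), d (g • x) = d x)
    (heig : ∀ (x : X) (h : G), h • b x = b x →
      ∃ c : ℂ, ‖c‖ = 1 ∧ U h (d x) = c • d x)
    -- the rank-1 covariant POVM `M`
    (M : X → (H →L[ℂ] H))
    (hM : ∀ x, M x = U (gx x) ∘L projOp (d x) ∘L adjoint (U (gx x)))
    -- the refined POVM `M'` on `Orb × G`
    (M' : X → G → (H →L[ℂ] H))
    (hM' : ∀ x g, M' x g =
      (((Finset.univ.filter fun h : G => h • b x = b x).card : ℂ))⁻¹ •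
        (U g ∘L projOp (d x) ∘L adjoint (U g))) :
    (∀ (x : X) (g : G), (M' x g).IsPositive) ∧
    -- covariance of `M'` for the action `g • (O, g') = (O, g g')`
    (∀ (g g' : G) (x : X), M' x (g * g') = U g ∘L M' x g' ∘L adjoint (U g)) ∧
    -- normalization of `M'` whenever `M` is normalized
    ((∑ x, M x = 1) → ∑ r ∈ Finset.univ.image b, ∑ g : G, M' r g = 1) ∧
    -- `M` is a post-processing of `M'`
    (∀ x : X, M x =
      ∑ h ∈ Finset.univ.filter (fun h : G => h • b x = b x), M' x (gx x * h)) := by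
  have hM'_eq : ∀ x g, M' x g = (#{h : G | h • b x = b x} : ℂ)⁻¹ • M (g • b x) := by
    intro x g
    have hy : gx (g • b x) • b x = g • b x := by simpa only [hb, hbb] using hgx (g • b x)
    have hstab : ((gx (g • b x))⁻¹ * g) • b x = b x := by rw [mul_smul, inv_smul_eq_iff, hy]
    have hdy : d (g • b x) = d x := by rw [hd, ← hd (gx x), hgx]
    obtain ⟨c, hc, hcv⟩ := heig x _ hstab
    rw [hM', hM, hdy, conj_projOp_eq_of_eigenvector hm hproj hc hcv]
  refine ⟨fun x g => ?_, fun g g' x => ?_, fun hnorm => ?_, fun x => ?_⟩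
  · rw [hM']
    exact (isPositive_conj_projOp _ _).smul_of_nonneg (by positivity)
  · rw [hM', hM', conj_mul_of_projective hm hproj, smul_comp, comp_smul]
  · have hfiber : ∀ r ∈ univ.image b, ∑ g : G, M' r g = ∑ y ∈ {y | b y = r}, M y := by
      intro r hr
      obtain ⟨x, -, rfl⟩ := mem_image.mp hr
      simp only [hM'_eq, hbb, ← smul_sum]
      rw [sum_smul_eq_card_stabilizer_nsmul (b x) {y | b y = b x}
          (fun y hy => ⟨gx y, by rw [← (mem_filter.mp hy).2, hgx]⟩) (by simp [hb, hbb]),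
        natCast_inv_smul_nsmul (card_filter_smul_self_ne_zero _)]
    rw [sum_congr rfl hfiber,
      sum_fiberwise_of_maps_to (fun y _ => mem_image_of_mem b (mem_univ y)), hnorm]
  · have hterm : ∀ h ∈ univ.filter (fun h : G => h • b x = b x),
        M' x (gx x * h) = (#{h : G | h • b x = b x} : ℂ)⁻¹ • M x := by
      intro h hh
      rw [hM'_eq, mul_smul, (mem_filter.mp hh).2, hgx]
    rw [sum_congr rfl hterm, sum_const, smul_comm,
      natCast_inv_smul_nsmul (card_filter_smul_self_ne_zero _)]

/-- A covariant rank-1 POVM `M` with seeds `|d_O⟩⟨d_O|` gives rise to the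
covariant POVM `M'_{O,g} := (#H_O)⁻¹ U(g)|d_O⟩⟨d_O|U(g)*` on the enlarged value space
`Orb × G`; `M'` is covariant, normalized whenever `M` is, and `M` is a post-processing
of `M'`: `M x = ∑_{h ∈ H_O} M'_{O, gₓ h}`. -/
theorem rank_one_covariant_povm_refinement
    {G X H : Type*} [Group G] [Fintype G] [Fintype X] [DecidableEq X] [MulAction G X]
    [NormedAddCommGroup H] [InnerProductSpace ℂ H] [FiniteDimensional ℂ H]
    (U : G → (H →L[ℂ] H)) (m : G → G → ℂ)
    (hUnit : ∀ g, adjoint (U g) ∘L U g = 1 ∧ U g ∘L adjoint (U g) = 1)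
    (hm : ∀ g h, ‖m g h‖ = 1)
    (hproj : ∀ g h, U (g * h) = m g h • (U g ∘L U h))
    -- orbit data
    (b : X → X) (gx : X → G)
    (hb : ∀ (g : G) (x : X), b (g • x) = b x)
    (hbb : ∀ x, b (b x) = b x)
    (hgx : ∀ x, gx x • b x = x)
    -- the seed vectors, constant on orbits, common eigenvectors of the stabilizer
    (d : X → H) (hd : ∀ (g : G) (x : X), d (g • x) = d x)
    (heig : ∀ (x : X) (h : G), h • b x = b x →
      ∃ c : ℂ, ‖c‖ = 1 ∧ U h (d x) = c • d x)
    -- the rank-1 covariant POVM `M`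
    (M : X → (H →L[ℂ] H))
    (hM : ∀ x, M x = U (gx x) ∘L projOp (d x) ∘L adjoint (U (gx x)))
    -- the refined POVM `M'` on `Orb × G`
    (M' : X → G → (H →L[ℂ] H))
    (hM' : ∀ x g, M' x g =
      (((Finset.univ.filter fun h : G => h • b x = b x).card : ℂ))⁻¹ •
        (U g ∘L projOp (d x) ∘L adjoint (U g))) :
    (∀ (x : X) (g : G), (M' x g).IsPositive) ∧
    -- covariance of `M'` for the action `g • (O, g') = (O, g g')`
    (∀ (g g' : G) (x : X), M' x (g * g') = U g ∘L M' x g' ∘L adjoint (U g)) ∧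
    -- normalization of `M'` whenever `M` is normalized
    ((∑ x, M x = 1) → ∑ r ∈ Finset.univ.image b, ∑ g : G, M' r g = 1) ∧
    -- `M` is a post-processing of `M'`
    (∀ x : X, M x =
      ∑ h ∈ Finset.univ.filter (fun h : G => h • b x = b x), M' x (gx x * h)) :=
  rank_one_covariant_povm_refinement_general U m hm hproj b gx hb hbb hgx d hd heig M hM M' hM'
end
end

section
/- Let G be a finite group, U : G → U(H), V : G → U(K) unitary representations, and L_{ϑ,i,m} : H → K operators satisfying L_{ϑ,i,m} U(g) = ∑_j ϑ_{i,j}(g) V(g) L_{ϑ,j,m} for all g ∈ G (ϑ an irreducible unitary representation of G) together with the normalization ∑_{ϑ,i,m} L_{ϑ,i,m}* L_{ϑ,i,m} = 1_H. Then Φ(ρ) := ∑_{ϑ,i,m} L_{ϑ,i,m} ρ L_{ϑ,i,m}* defines a (U,V)-covariant channel: Φ is completely positive, trace-preserving, and Φ(U(g)ρU(g)*) = V(g)Φ(ρ)V(g)* for all g ∈ G and all states ρ. -/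
open ContinuousLinearMap Matrix
open scoped InnerProductSpace
noncomputable section

private lemma clm_sum_comp {E F G' : Type*} [NormedAddCommGroup E] [NormedAddCommGroup F]
    [NormedAddCommGroup G'] [NormedSpace ℂ E] [NormedSpace ℂ F] [NormedSpace ℂ G']
    {ι : Type*} (s : Finset ι) (f : ι → (F →L[ℂ] G')) (g : E →L[ℂ] F) :
    (∑ i ∈ s, f i) ∘L g = ∑ i ∈ s, f i ∘L g := by
  ext x; simp [ContinuousLinearMap.sum_apply]

private lemma clm_comp_sum {E F G' : Type*} [NormedAddCommGroup E] [NormedAddCommGroup F]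
    [NormedAddCommGroup G'] [NormedSpace ℂ E] [NormedSpace ℂ F] [NormedSpace ℂ G']
    {ι : Type*} (s : Finset ι) (g : F →L[ℂ] G') (f : ι → (E →L[ℂ] F)) :
    g ∘L (∑ i ∈ s, f i) = ∑ i ∈ s, g ∘L f i := by
  ext x; simp [ContinuousLinearMap.sum_apply]

private lemma lm_sum_comp {R E F G' : Type*} [CommRing R] [AddCommGroup E] [AddCommGroup F]
    [AddCommGroup G'] [Module R E] [Module R F] [Module R G']
    {ι : Type*} (s : Finset ι) (f : ι → (F →ₗ[R] G')) (g : E →ₗ[R] F) :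
    (∑ i ∈ s, f i) ∘ₗ g = ∑ i ∈ s, f i ∘ₗ g := by
  ext x; simp

private lemma sum_swap5 {n : ℕ} {ι : Type*} [Fintype ι] {D Mn : ι → ℕ}
    (A : (t : ι) → Fin (D t) → Fin (Mn t) → Fin n → Fin n → ℂ) :
    ∑ k : Fin n, ∑ l : Fin n, ∑ t : ι, ∑ i : Fin (D t), ∑ m : Fin (Mn t), A t i m k l
      = ∑ t : ι, ∑ i : Fin (D t), ∑ m : Fin (Mn t), ∑ k : Fin n, ∑ l : Fin n, A t i m k l := by
  calc ∑ k : Fin n, ∑ l : Fin n, ∑ t : ι, ∑ i : Fin (D t), ∑ m : Fin (Mn t), A t i m k l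
      = ∑ k : Fin n, ∑ t : ι, ∑ l : Fin n, ∑ i : Fin (D t), ∑ m : Fin (Mn t), A t i m k l :=
        Finset.sum_congr rfl fun k _ => Finset.sum_comm
    _ = ∑ t : ι, ∑ k : Fin n, ∑ l : Fin n, ∑ i : Fin (D t), ∑ m : Fin (Mn t), A t i m k l :=
        Finset.sum_comm
    _ = ∑ t : ι, ∑ k : Fin n, ∑ i : Fin (D t), ∑ l : Fin n, ∑ m : Fin (Mn t), A t i m k l :=
        Finset.sum_congr rfl fun t _ => Finset.sum_congr rfl fun k _ => Finset.sum_comm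
    _ = ∑ t : ι, ∑ i : Fin (D t), ∑ k : Fin n, ∑ l : Fin n, ∑ m : Fin (Mn t), A t i m k l :=
        Finset.sum_congr rfl fun t _ => Finset.sum_comm
    _ = ∑ t : ι, ∑ i : Fin (D t), ∑ k : Fin n, ∑ m : Fin (Mn t), ∑ l : Fin n, A t i m k l :=
        Finset.sum_congr rfl fun t _ => Finset.sum_congr rfl fun i _ =>
          Finset.sum_congr rfl fun k _ => Finset.sum_comm
    _ = ∑ t : ι, ∑ i : Fin (D t), ∑ m : Fin (Mn t), ∑ k : Fin n, ∑ l : Fin n, A t i m k l :=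
        Finset.sum_congr rfl fun t _ => Finset.sum_congr rfl fun i _ => Finset.sum_comm

set_option maxHeartbeats 1000000 in
/-- Operators `L_{ϑ,i,m}` intertwining as
`L_{ϑ,i,m} U(g) = ∑_j ϑ_{i,j}(g) V(g) L_{ϑ,j,m}` and normalized by
`∑ L* L = 1` define, via `Φ(ρ) = ∑ L ρ L*`, a `(U,V)`-covariant channel: `Φ` is
completely positive, trace-preserving, and `Φ(U(g)ρU(g)*) = V(g)Φ(ρ)V(g)*`. -/
theorem covariant_channel_from_intertwiners
    {G H K ι : Type*} [Group G] [Fintype G] [Fintype ι]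
    [NormedAddCommGroup H] [InnerProductSpace ℂ H] [FiniteDimensional ℂ H]
    [NormedAddCommGroup K] [InnerProductSpace ℂ K] [FiniteDimensional ℂ K]
    (U : G → (H →L[ℂ] H)) (V : G → (K →L[ℂ] K))
    (hUhom : ∀ g g', U (g * g') = U g ∘L U g')
    (hVhom : ∀ g g', V (g * g') = V g ∘L V g')
    (hUu : ∀ g, adjoint (U g) ∘L U g = 1 ∧ U g ∘L adjoint (U g) = 1)
    (hVu : ∀ g, adjoint (V g) ∘L V g = 1 ∧ V g ∘L adjoint (V g) = 1)
    (D : ι → ℕ) (ϑ : (t : ι) → G → Matrix (Fin (D t)) (Fin (D t)) ℂ)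
    (hϑhom : ∀ t g g', ϑ t (g * g') = ϑ t g * ϑ t g')
    (hϑunit : ∀ t g, (ϑ t g)ᴴ * ϑ t g = 1 ∧ ϑ t g * (ϑ t g)ᴴ = 1)
    (Mn : ι → ℕ)
    (L : (t : ι) → Fin (D t) → Fin (Mn t) → (H →L[ℂ] K))
    (hint : ∀ (t : ι) (i : Fin (D t)) (m : Fin (Mn t)) (g : G),
      L t i m ∘L U g = ∑ j : Fin (D t), ϑ t g i j • (V g ∘L L t j m))
    (hnormal : ∑ t : ι, ∑ i : Fin (D t), ∑ m : Fin (Mn t),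
      adjoint (L t i m) ∘L L t i m = 1)
    (Φ : (H →L[ℂ] H) → (K →L[ℂ] K))
    (hΦ : ∀ ρ, Φ ρ = ∑ t : ι, ∑ i : Fin (D t), ∑ m : Fin (Mn t),
      L t i m ∘L ρ ∘L adjoint (L t i m)) :
    -- trace-preserving
    (∀ ρ : H →L[ℂ] H,
      LinearMap.trace ℂ K ((Φ ρ : K →L[ℂ] K) : K →ₗ[ℂ] K)
        = LinearMap.trace ℂ H ((ρ : H →L[ℂ] H) : H →ₗ[ℂ] H)) ∧
    -- complete positivity
    (∀ (n : ℕ) (x : Fin n → H) (y : Fin n → K),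
      0 ≤ (∑ k : Fin n, ∑ l : Fin n,
          ⟪y k, Φ ((innerSL ℂ (x l)).smulRight (x k)) (y l)⟫_ℂ).re ∧
      (∑ k : Fin n, ∑ l : Fin n,
          ⟪y k, Φ ((innerSL ℂ (x l)).smulRight (x k)) (y l)⟫_ℂ).im = 0) ∧
    -- `(U,V)`-covariance
    (∀ (g : G) (ρ : H →L[ℂ] H),
      Φ (U g ∘L ρ ∘L adjoint (U g)) = V g ∘L Φ ρ ∘L adjoint (V g)) := by
  refine ⟨?_, ?_, ?_⟩
  · -- trace preserving
    intro ρ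
    rw [hΦ]
    rw [ContinuousLinearMap.coe_sum]
    rw [map_sum]
    have step : ∀ t : ι, LinearMap.trace ℂ K
        ((∑ i : Fin (D t), ∑ m : Fin (Mn t),
          L t i m ∘L ρ ∘L adjoint (L t i m) : K →L[ℂ] K) : K →ₗ[ℂ] K)
        = LinearMap.trace ℂ H
          (((∑ i : Fin (D t), ∑ m : Fin (Mn t),
            adjoint (L t i m) ∘L L t i m : H →L[ℂ] H) : H →ₗ[ℂ] H) ∘ₗ (ρ : H →ₗ[ℂ] H)) := by
      intro t
      rw [ContinuousLinearMap.coe_sum, map_sum, ContinuousLinearMap.coe_sum,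
        lm_sum_comp, map_sum]
      refine Finset.sum_congr rfl fun i _ => ?_
      rw [ContinuousLinearMap.coe_sum, map_sum, ContinuousLinearMap.coe_sum,
        lm_sum_comp, map_sum]
      refine Finset.sum_congr rfl fun m _ => ?_
      have h1 : ((L t i m ∘L ρ ∘L adjoint (L t i m) : K →L[ℂ] K) : K →ₗ[ℂ] K)
          = ((L t i m : H →ₗ[ℂ] K) ∘ₗ ((ρ : H →ₗ[ℂ] H) ∘ₗ (adjoint (L t i m) : K →ₗ[ℂ] H))) := by
        rfl
      have h2 : (((adjoint (L t i m) ∘L L t i m : H →L[ℂ] H) : H →ₗ[ℂ] H) ∘ₗ (ρ : H →ₗ[ℂ] H))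
          = ((adjoint (L t i m) : K →ₗ[ℂ] H) ∘ₗ (L t i m : H →ₗ[ℂ] K)) ∘ₗ (ρ : H →ₗ[ℂ] H) := by
        rfl
      rw [h1, h2]
      calc LinearMap.trace ℂ K ((L t i m : H →ₗ[ℂ] K) ∘ₗ
              ((ρ : H →ₗ[ℂ] H) ∘ₗ (adjoint (L t i m) : K →ₗ[ℂ] H)))
          = LinearMap.trace ℂ H (((ρ : H →ₗ[ℂ] H) ∘ₗ (adjoint (L t i m) : K →ₗ[ℂ] H)) ∘ₗ
              (L t i m : H →ₗ[ℂ] K)) :=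
            LinearMap.trace_comp_comm' _ _
        _ = LinearMap.trace ℂ H ((ρ : H →ₗ[ℂ] H) ∘ₗ
              ((adjoint (L t i m) : K →ₗ[ℂ] H) ∘ₗ (L t i m : H →ₗ[ℂ] K))) := by
            rw [LinearMap.comp_assoc]
        _ = LinearMap.trace ℂ H (((adjoint (L t i m) : K →ₗ[ℂ] H) ∘ₗ (L t i m : H →ₗ[ℂ] K)) ∘ₗ
              (ρ : H →ₗ[ℂ] H)) :=
            LinearMap.trace_comp_comm' _ _
    rw [Finset.sum_congr rfl fun t _ => step t, ← map_sum, ← lm_sum_comp,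
      ← ContinuousLinearMap.coe_sum, hnormal]
    congr 1
  · -- complete positivity
    intro n x y
    set z : (t : ι) → Fin (D t) → Fin (Mn t) → ℂ :=
      fun t i m => ∑ k : Fin n, ⟪y k, L t i m (x k)⟫_ℂ with hz
    have key : (∑ k : Fin n, ∑ l : Fin n,
          ⟪y k, Φ ((innerSL ℂ (x l)).smulRight (x k)) (y l)⟫_ℂ)
        = ∑ t : ι, ∑ i : Fin (D t), ∑ m : Fin (Mn t),
          (starRingEnd ℂ (z t i m)) * z t i m := by
      have h1 : ∀ k l : Fin n, ⟪y k, Φ ((innerSL ℂ (x l)).smulRight (x k)) (y l)⟫_ℂ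
          = ∑ t : ι, ∑ i : Fin (D t), ∑ m : Fin (Mn t),
            ⟪L t i m (x l), y l⟫_ℂ * ⟪y k, L t i m (x k)⟫_ℂ := by
        intro k l
        simp only [hΦ, ContinuousLinearMap.sum_apply, inner_sum,
          ContinuousLinearMap.comp_apply, ContinuousLinearMap.smulRight_apply, innerSL_apply_apply,
          ContinuousLinearMap.map_smul, inner_smul_right,
          ContinuousLinearMap.adjoint_inner_right]
      calc ∑ k : Fin n, ∑ l : Fin n, ⟪y k, Φ ((innerSL ℂ (x l)).smulRight (x k)) (y l)⟫_ℂ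
          = ∑ k : Fin n, ∑ l : Fin n, ∑ t : ι, ∑ i : Fin (D t), ∑ m : Fin (Mn t),
              ⟪L t i m (x l), y l⟫_ℂ * ⟪y k, L t i m (x k)⟫_ℂ :=
            Finset.sum_congr rfl fun k _ => Finset.sum_congr rfl fun l _ => h1 k l
        _ = ∑ t : ι, ∑ i : Fin (D t), ∑ m : Fin (Mn t), ∑ k : Fin n, ∑ l : Fin n,
              ⟪L t i m (x l), y l⟫_ℂ * ⟪y k, L t i m (x k)⟫_ℂ := sum_swap5 _
        _ = ∑ t : ι, ∑ i : Fin (D t), ∑ m : Fin (Mn t), (starRingEnd ℂ (z t i m)) * z t i m := by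
            refine Finset.sum_congr rfl fun t _ => Finset.sum_congr rfl fun i _ =>
              Finset.sum_congr rfl fun m _ => ?_
            rw [hz, map_sum, Finset.sum_mul_sum, Finset.sum_comm]
            refine Finset.sum_congr rfl fun k _ => Finset.sum_congr rfl fun l _ => ?_
            rw [inner_conj_symm]
    rw [key]
    have hns : ∀ (t : ι) (i : Fin (D t)) (m : Fin (Mn t)),
        (starRingEnd ℂ (z t i m)) * z t i m = (Complex.normSq (z t i m) : ℂ) :=
      fun t i m => (Complex.normSq_eq_conj_mul_self).symm
    constructor
    · simp only [Complex.re_sum]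
      refine Finset.sum_nonneg fun t _ => Finset.sum_nonneg fun i _ =>
        Finset.sum_nonneg fun m _ => ?_
      rw [hns]
      simpa using Complex.normSq_nonneg _
    · simp only [Complex.im_sum]
      refine Finset.sum_eq_zero fun t _ => Finset.sum_eq_zero fun i _ =>
        Finset.sum_eq_zero fun m _ => ?_
      rw [hns]
      simp
  · -- covariance
    intro g ρ
    rw [hΦ, hΦ]
    have hR : V g ∘L (∑ t : ι, ∑ i : Fin (D t), ∑ m : Fin (Mn t),
          L t i m ∘L ρ ∘L adjoint (L t i m)) ∘L adjoint (V g)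
        = ∑ t : ι, ∑ i : Fin (D t), ∑ m : Fin (Mn t),
          V g ∘L (L t i m ∘L ρ ∘L adjoint (L t i m)) ∘L adjoint (V g) := by
      rw [clm_sum_comp, clm_comp_sum]
      refine Finset.sum_congr rfl fun t _ => ?_
      rw [clm_sum_comp, clm_comp_sum]
      refine Finset.sum_congr rfl fun i _ => ?_
      rw [clm_sum_comp, clm_comp_sum]
    rw [hR]
    refine Finset.sum_congr rfl fun t _ => ?_
    rw [Finset.sum_comm]
    conv_rhs => rw [Finset.sum_comm]
    refine Finset.sum_congr rfl fun m _ => ?_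
    have hLU : ∀ i : Fin (D t), L t i m ∘L (U g ∘L ρ ∘L adjoint (U g)) ∘L adjoint (L t i m)
        = (L t i m ∘L U g) ∘L ρ ∘L adjoint (L t i m ∘L U g) := by
      intro i
      rw [ContinuousLinearMap.adjoint_comp]
      simp only [← ContinuousLinearMap.comp_assoc]
    calc ∑ i : Fin (D t), L t i m ∘L (U g ∘L ρ ∘L adjoint (U g)) ∘L adjoint (L t i m)
        = ∑ i : Fin (D t), (L t i m ∘L U g) ∘L ρ ∘L adjoint (L t i m ∘L U g) :=
          Finset.sum_congr rfl fun i _ => hLU i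
      _ = ∑ i : Fin (D t), ∑ j : Fin (D t), ∑ j' : Fin (D t),
            (ϑ t g i j * starRingEnd ℂ (ϑ t g i j')) •
              ((V g ∘L L t j m) ∘L ρ ∘L (adjoint (L t j' m) ∘L adjoint (V g))) := by
          refine Finset.sum_congr rfl fun i _ => ?_
          rw [hint t i m g, map_sum, clm_sum_comp]
          refine Finset.sum_congr rfl fun j _ => ?_
          rw [clm_comp_sum, clm_comp_sum]
          refine Finset.sum_congr rfl fun j' _ => ?_
          rw [map_smulₛₗ, ContinuousLinearMap.adjoint_comp,
            ContinuousLinearMap.comp_smul, ContinuousLinearMap.comp_smul,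
            ContinuousLinearMap.smul_comp, smul_smul]
          congr 1
          ring
      _ = ∑ j : Fin (D t), ∑ j' : Fin (D t),
            (∑ i : Fin (D t), ϑ t g i j * starRingEnd ℂ (ϑ t g i j')) •
              ((V g ∘L L t j m) ∘L ρ ∘L (adjoint (L t j' m) ∘L adjoint (V g))) := by
          rw [Finset.sum_comm]
          refine Finset.sum_congr rfl fun j _ => ?_
          rw [Finset.sum_comm]
          refine Finset.sum_congr rfl fun j' _ => ?_
          rw [← Finset.sum_smul]
      _ = ∑ j : Fin (D t), ∑ j' : Fin (D t),
            ((1 : Matrix (Fin (D t)) (Fin (D t)) ℂ) j' j) •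
              ((V g ∘L L t j m) ∘L ρ ∘L (adjoint (L t j' m) ∘L adjoint (V g))) := by
          refine Finset.sum_congr rfl fun j _ => Finset.sum_congr rfl fun j' _ => ?_
          congr 1
          rw [← (hϑunit t g).1, Matrix.mul_apply]
          refine Finset.sum_congr rfl fun i _ => ?_
          simp [Matrix.conjTranspose_apply, mul_comm]
      _ = ∑ j : Fin (D t), (V g ∘L L t j m) ∘L ρ ∘L (adjoint (L t j m) ∘L adjoint (V g)) := by
          refine Finset.sum_congr rfl fun j _ => ?_
          simp only [Matrix.one_apply, ite_smul, one_smul, zero_smul]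
          rw [Finset.sum_ite_eq']
          simp
      _ = ∑ i : Fin (D t), V g ∘L (L t i m ∘L ρ ∘L adjoint (L t i m)) ∘L adjoint (V g) := by
          refine Finset.sum_congr rfl fun j _ => ?_
          ext v; simp
end
end
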